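/- arXiv:1812.02072 — 2 statements merged into one kernel-verified Lean document; each statement's English description precedes it below -/
import Mathlib

section
/- Define C_n = H_{n-1,1}^2 / H_{n-1,2} for integers n ≥ 2. For every integer n ≥ 2 with n ≠ 4, C_n/n < 121/196; equivalently, the function n ↦ C_n/n over integers n ≥ 2 attains its unique maximum at n = 4. -/
/-!
Writing `n = m + 1`, the claim for `m ≥ 4` is `H_{m,1}² < (121/196) (m + 1) H_{m,2}`, which holds
with room to spare at `m = 4` and propagates by induction. Passing from `m` to `m + 1` adds
`a = 1/(m+1)` to `H_{m,1}` and `a²` to `H_{m,2}`; the cross term `2 H_{m,1} a` on the left is at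
most `121/144`, because `H_{m,1} ≤ (121/288)(m + 1)`, while the right-hand side gains at least
`(121/196) H_{m,2} ≥ (121/196)(49/36) = 121/144`. The cases `n = 2, 3` are computed directly.
-/

noncomputable def H (m j : ℕ) : ℝ := ∑ i ∈ Finset.Icc 1 m, (1 : ℝ) / (i : ℝ) ^ j

noncomputable def C (n : ℕ) : ℝ := (H (n - 1) 1) ^ 2 / H (n - 1) 2

@[simp]
lemma H_zero (j : ℕ) : H 0 j = 0 := by simp [H]

lemma H_succ (m j : ℕ) : H (m + 1) j = H m j + 1 / ((m : ℝ) + 1) ^ j := by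
  rw [H, Finset.sum_Icc_succ_top (by omega)]
  push_cast
  rfl

lemma C_succ (m : ℕ) : C (m + 1) = H m 1 ^ 2 / H m 2 := rfl

lemma H_monotone (j : ℕ) : Monotone (H · j) :=
  monotone_nat_of_le_succ fun m => by
    rw [H_succ]
    have : 0 < 1 / ((m : ℝ) + 1) ^ j := by positivity
    linarith

lemma H_two_ge {m : ℕ} (hm : 3 ≤ m) : 49 / 36 ≤ H m 2 :=
  calc (49 / 36 : ℝ) = H 3 2 := by norm_num [H_succ]
    _ ≤ H m 2 := H_monotone 2 hm

lemma H_one_le {m : ℕ} (hm : 4 ≤ m) : H m 1 ≤ 121 / 288 * ((m : ℝ) + 1) := by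
  induction m, hm using Nat.le_induction with
  | base => norm_num [H_succ]
  | succ m hm ih =>
    have hm' : (4 : ℝ) ≤ m := by exact_mod_cast hm
    have hstep : 1 / ((m : ℝ) + 1) ≤ 121 / 288 := by
      rw [div_le_iff₀ (by positivity)]
      linarith
    rw [H_succ, pow_one]
    push_cast
    linarith

lemma sq_H_one_lt {m : ℕ} (hm : 4 ≤ m) :
    H m 1 ^ 2 < 121 / 196 * ((m : ℝ) + 1) * H m 2 := by
  induction m, hm using Nat.le_induction with
  | base => norm_num [H_succ]
  | succ m hm ih =>
    set a : ℝ := 1 / ((m : ℝ) + 1) with ha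
    have ha_pos : 0 < a := by positivity
    have ha_mul : a * ((m : ℝ) + 1) = 1 := by rw [ha]; field_simp
    have hcross : 2 * H m 1 * a ≤ 121 / 144 := by
      nlinarith [H_one_le hm]
    have hgain : (121 : ℝ) / 144 ≤ 121 / 196 * H m 2 := by
      linarith [H_two_ge (by omega : 3 ≤ m)]
    have hsq : a ^ 2 ≤ 121 / 196 * ((m : ℝ) + 2) * a ^ 2 := by
      have hm' : (4 : ℝ) ≤ m := by exact_mod_cast hm
      nlinarith [sq_nonneg a]
    have ha_sq : 1 / ((m : ℝ) + 1) ^ 2 = a ^ 2 := by rw [ha, one_div_pow]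
    rw [H_succ, H_succ, pow_one, ← ha, ha_sq]
    push_cast
    nlinarith [ih]

theorem C_div_n_max_at_four (n : ℕ) (hn : 2 ≤ n) (hne : n ≠ 4) :
    C n / n < 121 / 196 := by
  obtain ⟨m, rfl⟩ : ∃ m, n = m + 1 := ⟨n - 1, by omega⟩
  rw [C_succ]
  rcases (by omega : m = 1 ∨ m = 2 ∨ 4 ≤ m) with rfl | rfl | hm
  · norm_num [H_succ]
  · norm_num [H_succ]
  · have hH2 : 0 < H m 2 := by linarith [H_two_ge (by omega : 3 ≤ m)]
    rw [div_div, div_lt_iff₀ (by positivity)]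
    push_cast
    linarith [sq_H_one_lt hm]
end

section
/- If n is a positive multiple of 4, then among all partitions of n into parts ≥ 2, the partition consisting of n/4 parts equal to 4 maximizes ∑_i C_{n_i}, where C_j = H_{j-1,1}^2/H_{j-1,2}. -/
/-!
The ratio `C j / j` over `j ≥ 2` is largest at `j = 4`, where it equals `121 / 196`; summing
`C j ≤ (C 4 / 4) * j` over the parts of a partition of `n` bounds the left side by
`(n / 4) * C 4`. For `j ≤ 26` the ratio is checked numerically. For `j = m + 1` with `m ≥ 26`,
put `t = m ^ (1/8)`: then `H m 1 ≤ 1 + log m ≤ 8 t - 7` and `H m 2 ≥ H 26 2 ≥ 8 / 5`, and the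
claim reduces to the polynomial inequality `245 (8 t - 7)² ≤ 242 (t⁸ + 1)` for `t ≥ 3 / 2`.
-/

lemma Real.log_le_rpow_sub_one_div {x ε : ℝ} (hx : 0 < x) (hε : 0 < ε) :
    Real.log x ≤ (x ^ ε - 1) / ε := by
  rw [le_div_iff₀' hε, ← Real.log_rpow hx]
  exact Real.log_le_sub_one_of_pos (Real.rpow_pos_of_pos hx ε)

lemma sq_eight_mul_sub_seven_le {t : ℝ} (ht : 3 / 2 ≤ t) :
    245 * (8 * t - 7) ^ 2 ≤ 242 * (t ^ 8 + 1) := by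
  have hd : 0 ≤ t - 3 / 2 := by linarith
  have ht0 : 0 ≤ t := by linarith
  nlinarith [pow_nonneg hd 2, mul_nonneg (mul_nonneg (pow_nonneg hd 2) ht0) ht0,
    mul_nonneg (pow_nonneg hd 3) (pow_nonneg ht0 5),
    mul_nonneg (pow_nonneg hd 2) (pow_nonneg ht0 6)]

lemma H_one_eq_harmonic (m : ℕ) : H m 1 = harmonic m := by
  simp [H, harmonic_eq_sum_Icc, one_div]

lemma H_nonneg (m j : ℕ) : 0 ≤ H m j := by
  unfold H; positivity

lemma C_four : C 4 = 121 / 49 := by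
  norm_num [C, H, Finset.sum_Icc_succ_top]

lemma C_succ_le_mul_of_26_le {m : ℕ} (hm : 26 ≤ m) : C (m + 1) ≤ C 4 / 4 * (m + 1) := by
  have hm0 : (0 : ℝ) < m := by positivity
  have hH2 : 8 / 5 ≤ H m 2 := by
    calc (8 / 5 : ℝ) ≤ H 26 2 := by norm_num [H, Finset.sum_Icc_succ_top]
      _ ≤ H m 2 := H_monotone 2 hm
  set t : ℝ := (m : ℝ) ^ (1 / 8 : ℝ)
  have ht8 : t ^ 8 = m := by
    rw [← Real.rpow_natCast, ← Real.rpow_mul hm0.le]; norm_num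
  have ht : 3 / 2 ≤ t := by
    refine le_of_pow_le_pow_left₀ (n := 8) (by norm_num) (by positivity) ?_
    have : (26 : ℝ) ≤ m := by exact_mod_cast hm
    rw [ht8]; linarith
  have hH1 : H m 1 ≤ 8 * t - 7 := by
    have := Real.log_le_rpow_sub_one_div hm0 (ε := 1 / 8) (by norm_num)
    rw [H_one_eq_harmonic]
    linarith [harmonic_le_one_add_log m]
  rw [C_succ, C_four, div_le_iff₀ (by linarith)]
  calc H m 1 ^ 2 ≤ (8 * t - 7) ^ 2 := pow_le_pow_left₀ (H_nonneg m 1) hH1 2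
    _ ≤ 121 / 49 / 4 * (t ^ 8 + 1) * (8 / 5) := by linarith [sq_eight_mul_sub_seven_le ht]
    _ ≤ 121 / 49 / 4 * (m + 1) * H m 2 := by rw [ht8]; gcongr

lemma C_le_mul_of_le_26 {j : ℕ} (h2 : 2 ≤ j) (h26 : j ≤ 26) : C j ≤ C 4 / 4 * j := by
  rw [C_four]
  interval_cases j <;> norm_num [C, H, Finset.sum_Icc_succ_top]

lemma C_le_mul (j : ℕ) (hj : 2 ≤ j) : C j ≤ C 4 / 4 * j := by
  rcases le_or_gt j 26 with h | h
  · exact C_le_mul_of_le_26 hj h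
  · obtain ⟨m, rfl⟩ : ∃ m, j = m + 1 := ⟨j - 1, by omega⟩
    exact_mod_cast C_succ_le_mul_of_26_le (by omega : 26 ≤ m)

theorem rule_of_fours_multiple_general (n : ℕ) (h4 : 4 ∣ n)
    (l : Multiset ℕ) (hl : ∀ x ∈ l, 2 ≤ x) (hsum : l.sum = n) :
    (l.map C).sum ≤ ((Multiset.replicate (n / 4) 4).map C).sum := by
  obtain ⟨k, rfl⟩ := h4
  calc (l.map C).sum ≤ (l.map fun j : ℕ => C 4 / 4 * (j : ℝ)).sum :=
        Multiset.sum_map_le_sum_map _ _ fun j hj => C_le_mul j (hl j hj)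
    _ = ((Multiset.replicate (4 * k / 4) 4).map C).sum := by
        rw [Multiset.sum_map_mul_left, ← Nat.cast_multiset_sum, hsum, Multiset.map_replicate,
          Multiset.sum_replicate, nsmul_eq_mul, Nat.mul_div_cancel_left k (by norm_num)]
        push_cast; ring

theorem rule_of_fours_multiple (n : ℕ) (hn : 0 < n) (h4 : 4 ∣ n)
    (l : Multiset ℕ) (hl : ∀ x ∈ l, 2 ≤ x) (hsum : l.sum = n) :
    (l.map C).sum ≤ ((Multiset.replicate (n / 4) 4).map C).sum :=
  rule_of_fours_multiple_general n h4 l hl hsum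
end
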